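/- Let μ > 0 and let p : [0,∞) → ℝ^ℕ be a solution of the mean-field ODE system d/dt p_n(t) = 𝓛[p(t)]_n with p(t) ∈ V_μ for all t ≥ 0. Assume that the series E[p(t) − p*] = ∑_{n≥0} (p_n(t) − p*_n)²/p*_n and the termwise-differentiated series ∑_{n≥0} 2(p_n(t) − p*_n)·𝓛[p(t)]_n/p*_n both converge uniformly on compact subsets of [0,∞). Then for every t ≥ 0, d/dt E[p(t) − p*] = −2·μ·D[p(t)], where D[p] = ∑_{n≥0} p*_n·(p_{n+1}/p*_{n+1} − p_n/p*_n)². -/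

import Mathlib

open Filter

/-- The poor-biased generator: `𝓛[p]_0 = p_1 - μ p_0` and, for `n ≥ 1`,
`𝓛[p]_n = (n+1) p_{n+1} + μ p_{n-1} - (n+μ) p_n`. -/
noncomputable def gen (μ : ℝ) (p : ℕ → ℝ) : ℕ → ℝ
  | 0 => p 1 - μ * p 0
  | n + 1 => ((n : ℝ) + 2) * p (n + 2) + μ * p n - (((n : ℝ) + 1) + μ) * p (n + 1)

/-- `V_μ`: probability mass functions on `ℕ` with mean `μ`. -/
def memV (μ : ℝ) (p : ℕ → ℝ) : Prop :=
  (∀ n, 0 ≤ p n) ∧ (∑' n : ℕ, p n = 1) ∧ (∑' n : ℕ, (n : ℝ) * p n = μ)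

/-- The Poisson distribution with mean `μ`: `p*_n = μ^n e^{-μ} / n!`. -/
noncomputable def pstar (μ : ℝ) (n : ℕ) : ℝ := μ ^ n * Real.exp (-μ) / n.factorial

/-- The series `∑_n f n t` converges uniformly on compact subsets of `[0, ∞)`. -/
def UnifConvOnCompacts (f : ℕ → ℝ → ℝ) : Prop :=
  ∀ K : Set ℝ, K ⊆ Set.Ici 0 → IsCompact K →
    TendstoUniformlyOn (fun (m : ℕ) (t : ℝ) => ∑ n ∈ Finset.range m, f n t)
      (fun t => ∑' n : ℕ, f n t) atTop K

/-!
Write `x = q / p*` for the relative density and `K` for the probability flux, so that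
`𝓛[q]_n = K_{n+1} - K_n` and, by detailed balance `(n+1) p*_{n+1} = μ p*_n`,
`K_{n+1} = μ p*_n (x_{n+1} - x_n)`. Summation by parts turns the partial sums of the termwise
derivative `∑ 2 (x_n - 1) 𝓛[q]_n` into `-2μ` times the partial sums of `D[q]` plus the boundary term
`2 (x_N - 1) K_{N+1}`, which is at most `3μ a_N + (N+1) a_{N+1}` for the summable energy terms `a`.
Since `n a_n` cannot stay away from `0`, the boundary term is small along a subsequence, and the
dissipation partial sums, being monotone, converge to the right value. The derivative of the energy
then comes from the theorem on uniform limits of derivatives, applied on the convex set `[0, t + 1]`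
because the derivative at `t = 0` is one-sided.
-/

open Finset Topology

theorem Summable.frequently_natCast_add_one_mul_lt {a : ℕ → ℝ} (ha : Summable a) {ε : ℝ}
    (hε : 0 < ε) : ∃ᶠ n : ℕ in atTop, ((n : ℝ) + 1) * a n < ε := by
  intro hlarge
  have hinv : Summable (fun n : ℕ => ((n + 1 : ℕ) : ℝ)⁻¹) := by
    refine (ha.mul_left ε⁻¹).of_norm_bounded_eventually_nat ?_
    filter_upwards [hlarge] with n hn
    rw [not_lt] at hn
    rw [Real.norm_of_nonneg (by positivity), Nat.cast_succ, inv_le_iff_one_le_mul₀ (by positivity)]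
    calc (1 : ℝ) = ε⁻¹ * ε := (inv_mul_cancel₀ hε.ne').symm
      _ ≤ ε⁻¹ * (((n : ℝ) + 1) * a n) := by gcongr
      _ = ε⁻¹ * a n * ((n : ℝ) + 1) := by ring
  exact Real.not_summable_natCast_inv ((summable_nat_add_iff 1).1 hinv)

theorem Monotone.tendsto_neg_of_frequently_abs_add_lt {T S : ℕ → ℝ} {L : ℝ}
    (hT : Tendsto T atTop (𝓝 L)) (hS : Monotone S)
    (hsmall : ∀ ε > 0, ∃ᶠ N in atTop, |T N + S N| < ε) : Tendsto S atTop (𝓝 (-L)) := by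
  obtain ⟨φ, hφ, hφsmall⟩ :=
    extraction_forall_of_frequently fun n : ℕ => hsmall (1 / ((n : ℝ) + 1)) (by positivity)
  have hsum : Tendsto (fun n => T (φ n) + S (φ n)) atTop (𝓝 0) :=
    squeeze_zero_norm (fun n => (hφsmall n).le) tendsto_one_div_add_atTop_nhds_zero_nat
  rw [tendsto_iff_tendsto_subseq_of_monotone hS hφ.tendsto_atTop]
  simpa [Function.comp_def] using hsum.sub (hT.comp hφ.tendsto_atTop)

section UniformLimitDeriv

variable {𝕜 G : Type*} [RCLike 𝕜] [NormedAddCommGroup G] [NormedSpace 𝕜 G]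
  {s : Set 𝕜} {f f' : ℕ → 𝕜 → G} {g g' : 𝕜 → G}

theorem Convex.norm_sub_sub_le_of_tendsto (hs : Convex ℝ s)
    (hf : ∀ n, ∀ y ∈ s, HasDerivWithinAt (f n) (f' n y) s y)
    (hfg : ∀ y ∈ s, Tendsto (fun n => f n y) atTop (𝓝 (g y))) {N : ℕ} {C : ℝ}
    (hC : ∀ m ≥ N, ∀ z ∈ s, ‖f' m z - f' N z‖ ≤ C) {x y : 𝕜} (hx : x ∈ s) (hy : y ∈ s) :
    ‖(g y - f N y) - (g x - f N x)‖ ≤ C * ‖y - x‖ := by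
  have hlim : Tendsto (fun m => (f m y - f N y) - (f m x - f N x)) atTop
      (𝓝 ((g y - f N y) - (g x - f N x))) :=
    ((hfg y hy).sub_const _).sub ((hfg x hx).sub_const _)
  refine le_of_tendsto hlim.norm (eventually_atTop.2 ⟨N, fun m hm => ?_⟩)
  exact hs.norm_image_sub_le_of_norm_hasDerivWithin_le
    (fun z hz => (hf m z hz).sub (hf N z hz)) (hC m hm) hx hy

theorem Convex.hasDerivWithinAt_of_tendstoUniformlyOn (hs : Convex ℝ s)
    (hf : ∀ n, ∀ y ∈ s, HasDerivWithinAt (f n) (f' n y) s y)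
    (hf' : TendstoUniformlyOn f' g' atTop s)
    (hfg : ∀ y ∈ s, Tendsto (fun n => f n y) atTop (𝓝 (g y))) {x : 𝕜} (hx : x ∈ s) :
    HasDerivWithinAt g (g' x) s x := by
  rw [hasDerivWithinAt_iff_isLittleO, Asymptotics.isLittleO_iff]
  intro c hc
  obtain ⟨N, hN⟩ := eventually_atTop.1 (Metric.tendstoUniformlyOn_iff.1 hf' (c / 6) (by positivity))
  have hCauchy : ∀ m ≥ N, ∀ z ∈ s, ‖f' m z - f' N z‖ ≤ c / 3 := fun m hm z hz => by
    rw [← dist_eq_norm]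
    linarith [dist_triangle_left (f' m z) (f' N z) (g' z), hN m hm z hz, hN N le_rfl z hz]
  have hNx : ‖f' N x - g' x‖ ≤ c / 3 := by
    rw [← dist_eq_norm, dist_comm]
    linarith [hN N le_rfl x hx]
  have hfN := hf N x hx
  rw [hasDerivWithinAt_iff_isLittleO, Asymptotics.isLittleO_iff] at hfN
  filter_upwards [hfN (by positivity : 0 < c / 3), self_mem_nhdsWithin] with y hy hys
  have hlimit := hs.norm_sub_sub_le_of_tendsto hf hfg hCauchy hx hys
  have hslope : ‖(y - x) • (f' N x - g' x)‖ ≤ c / 3 * ‖y - x‖ := by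
    rw [norm_smul, mul_comm]
    exact mul_le_mul_of_nonneg_right hNx (norm_nonneg _)
  calc ‖g y - g x - (y - x) • g' x‖
      = ‖((g y - f N y) - (g x - f N x)) + (f N y - f N x - (y - x) • f' N x)
          + (y - x) • (f' N x - g' x)‖ := by
        congr 1; rw [smul_sub]; abel
    _ ≤ c / 3 * ‖y - x‖ + c / 3 * ‖y - x‖ + c / 3 * ‖y - x‖ :=
        norm_add₃_le.trans (by gcongr)
    _ = c * ‖y - x‖ := by ring

end UniformLimitDeriv

theorem pstar_pos {μ : ℝ} (hμ : 0 < μ) (n : ℕ) : 0 < pstar μ n := by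
  unfold pstar
  positivity

theorem natCast_add_one_mul_pstar_succ (μ : ℝ) (n : ℕ) :
    ((n : ℝ) + 1) * pstar μ (n + 1) = μ * pstar μ n := by
  simp only [pstar, Nat.factorial_succ, pow_succ, Nat.cast_mul, Nat.cast_succ]
  field_simp

noncomputable def flux (μ : ℝ) (q : ℕ → ℝ) : ℕ → ℝ
  | 0 => 0
  | n + 1 => ((n : ℝ) + 1) * q (n + 1) - μ * q n

theorem gen_eq_flux_sub (μ : ℝ) (q : ℕ → ℝ) (n : ℕ) :
    gen μ q n = flux μ q (n + 1) - flux μ q n := by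
  cases n with
  | zero => simp [gen, flux]
  | succ n => simp only [gen, flux]; push_cast; ring

theorem flux_succ_eq {μ : ℝ} (hμ : 0 < μ) (q : ℕ → ℝ) (n : ℕ) :
    flux μ q (n + 1) = μ * pstar μ n * (q (n + 1) / pstar μ (n + 1) - q n / pstar μ n) := by
  have h₀ := (pstar_pos hμ n).ne'
  have h₁ := (pstar_pos hμ (n + 1)).ne'
  rw [flux]
  field_simp
  linear_combination q (n + 1) * natCast_add_one_mul_pstar_succ μ n

theorem sum_range_succ_energy_deriv {μ : ℝ} (hμ : 0 < μ) (q : ℕ → ℝ) (N : ℕ) :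
    ∑ n ∈ range (N + 1), 2 * (q n - pstar μ n) * gen μ q n / pstar μ n =
      2 * (q N / pstar μ N - 1) * flux μ q (N + 1) -
        2 * μ * ∑ n ∈ range N, pstar μ n * (q (n + 1) / pstar μ (n + 1) - q n / pstar μ n) ^ 2 := by
  induction N with
  | zero =>
    have h := (pstar_pos hμ 0).ne'
    simp only [zero_add, sum_range_one, range_zero, sum_empty, gen_eq_flux_sub, flux]
    field_simp
    ring
  | succ N ih =>
    rw [sum_range_succ, ih, sum_range_succ, gen_eq_flux_sub, flux_succ_eq hμ q N]
    have h₀ := (pstar_pos hμ N).ne'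
    have h₁ := (pstar_pos hμ (N + 1)).ne'
    field_simp
    ring

theorem abs_boundary_le {μ : ℝ} (hμ : 0 < μ) (q : ℕ → ℝ) (N : ℕ) :
    |2 * (q N / pstar μ N - 1) * flux μ q (N + 1)| ≤
      3 * μ * ((q N - pstar μ N) ^ 2 / pstar μ N) +
        ((N : ℝ) + 1) * ((q (N + 1) - pstar μ (N + 1)) ^ 2 / pstar μ (N + 1)) := by
  have h₀ := (pstar_pos hμ N).ne'
  have h₁ := (pstar_pos hμ (N + 1)).ne'
  have ha₀ : (q N - pstar μ N) ^ 2 / pstar μ N = pstar μ N * (q N / pstar μ N - 1) ^ 2 := by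
    field_simp
  have ha₁ : ((N : ℝ) + 1) * ((q (N + 1) - pstar μ (N + 1)) ^ 2 / pstar μ (N + 1)) =
      μ * pstar μ N * (q (N + 1) / pstar μ (N + 1) - 1) ^ 2 := by
    rw [← natCast_add_one_mul_pstar_succ]
    field_simp
  set u := q N / pstar μ N - 1
  set v := q (N + 1) / pstar μ (N + 1) - 1
  have hflux : flux μ q (N + 1) = μ * pstar μ N * (v - u) := by
    rw [flux_succ_eq hμ]
    ring
  have hc : 0 ≤ μ * pstar μ N := (mul_pos hμ (pstar_pos hμ N)).le
  rw [hflux, ha₀, ha₁, abs_le]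
  constructor <;> nlinarith [mul_nonneg hc (sq_nonneg (u + v)), mul_nonneg hc (sq_nonneg (u - v)),
    mul_nonneg hc (sq_nonneg u)]

theorem frequently_abs_boundary_lt {μ : ℝ} (hμ : 0 < μ) (q : ℕ → ℝ)
    (ha : Summable fun n => (q n - pstar μ n) ^ 2 / pstar μ n) {ε : ℝ} (hε : 0 < ε) :
    ∃ᶠ N : ℕ in atTop, |2 * (q N / pstar μ N - 1) * flux μ q (N + 1)| < ε := by
  have hsmall : ∀ᶠ N : ℕ in atTop, 3 * μ * ((q N - pstar μ N) ^ 2 / pstar μ N) < ε / 2 := by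
    have h := ha.tendsto_atTop_zero.const_mul (3 * μ)
    rw [mul_zero] at h
    exact h.eventually_lt_const (half_pos hε)
  have hfreq := ((summable_nat_add_iff 1).2 ha).frequently_natCast_add_one_mul_lt (half_pos hε)
  exact (hfreq.and_eventually hsmall).mono fun N hN =>
    (abs_boundary_le hμ q N).trans_lt (by linarith [hN.1, hN.2])

theorem eq_neg_two_mul_dissipation_of_tendsto {μ : ℝ} (hμ : 0 < μ) (q : ℕ → ℝ)
    (ha : Summable fun n => (q n - pstar μ n) ^ 2 / pstar μ n) {L : ℝ}
    (hL : Tendsto (fun N => ∑ n ∈ range N, 2 * (q n - pstar μ n) * gen μ q n / pstar μ n)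
      atTop (𝓝 L)) :
    L = -2 * μ * ∑' n, pstar μ n * (q (n + 1) / pstar μ (n + 1) - q n / pstar μ n) ^ 2 := by
  set d := fun n => pstar μ n * (q (n + 1) / pstar μ (n + 1) - q n / pstar μ n) ^ 2
  have hd : ∀ n, 0 ≤ d n := fun n => mul_nonneg (pstar_pos hμ n).le (sq_nonneg _)
  have hS : Tendsto (fun N => 2 * μ * ∑ n ∈ range N, d n) atTop (𝓝 (-L)) := by
    refine Monotone.tendsto_neg_of_frequently_abs_add_lt (hL.comp (tendsto_add_atTop_nat 1))
      (((sum_mono_set_of_nonneg hd).comp range_mono).const_mul (by positivity)) fun ε hε => ?_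
    simpa [sum_range_succ_energy_deriv hμ, d] using frequently_abs_boundary_lt hμ q ha hε
  have hd_sum : HasSum d (-L / (2 * μ)) := by
    refine (hasSum_iff_tendsto_nat_of_nonneg hd _).2 ?_
    convert hS.div_const (2 * μ) using 1
    ext N
    field_simp
  rw [hd_sum.tsum_eq]
  field_simp

theorem UnifConvOnCompacts.tendsto {f : ℕ → ℝ → ℝ} (hf : UnifConvOnCompacts f) {t : ℝ}
    (ht : t ∈ Set.Ici 0) :
    Tendsto (fun m => ∑ n ∈ range m, f n t) atTop (𝓝 (∑' n, f n t)) :=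
  (hf {t} (Set.singleton_subset_iff.2 ht) isCompact_singleton).tendsto_at rfl

theorem energy_dissipation_general (μ : ℝ) (hμ : 0 < μ) (p : ℝ → ℕ → ℝ)
    (hode : ∀ t ∈ Set.Ici (0 : ℝ), ∀ n : ℕ,
      HasDerivWithinAt (fun s => p s n) (gen μ (p t) n) (Set.Ici 0) t)
    (hunifE : UnifConvOnCompacts (fun n t => (p t n - pstar μ n) ^ 2 / pstar μ n))
    (hunifE' : UnifConvOnCompacts
      (fun n t => 2 * (p t n - pstar μ n) * gen μ (p t) n / pstar μ n)) :
    ∀ t ∈ Set.Ici (0 : ℝ),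
      HasDerivWithinAt (fun s => ∑' n : ℕ, (p s n - pstar μ n) ^ 2 / pstar μ n)
        (-2 * μ * ∑' n : ℕ, pstar μ n * (p t (n + 1) / pstar μ (n + 1) - p t n / pstar μ n) ^ 2)
        (Set.Ici 0) t := by
  intro t ht
  have ha : Summable fun n => (p t n - pstar μ n) ^ 2 / pstar μ n :=
    ((hasSum_iff_tendsto_nat_of_nonneg (fun n => div_nonneg (sq_nonneg _) (pstar_pos hμ n).le)
      _).2 (hunifE.tendsto ht)).summable
  rw [← eq_neg_two_mul_dissipation_of_tendsto hμ (p t) ha (hunifE'.tendsto ht)]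
  have hK : Set.Icc 0 (t + 1) ⊆ Set.Ici 0 := Set.Icc_subset_Ici_self
  have hpartial : ∀ m, ∀ y ∈ Set.Icc 0 (t + 1), HasDerivWithinAt
      (fun s => ∑ n ∈ range m, (p s n - pstar μ n) ^ 2 / pstar μ n)
      (∑ n ∈ range m, 2 * (p y n - pstar μ n) * gen μ (p y) n / pstar μ n)
      (Set.Icc 0 (t + 1)) y := fun m y hy =>
    HasDerivWithinAt.fun_sum fun n _ =>
      ((((hode y (hK hy) n).mono hK).sub_const _).fun_pow 2).div_const _ |>.congr_deriv (by ring)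
  refine ((convex_Icc 0 (t + 1)).hasDerivWithinAt_of_tendstoUniformlyOn hpartial
    (hunifE' _ hK isCompact_Icc) (fun y hy => hunifE.tendsto (hK hy))
    ⟨ht, by linarith⟩).mono_of_mem_nhdsWithin ?_
  rw [← Set.Ici_inter_Iic]
  exact inter_mem_nhdsWithin _ (Iic_mem_nhds (by linarith))

/-- Energy dissipation identity: `d/dt E[p(t) - p*] = -2 μ D[p(t)]`, where
`E[q] = ∑_n q_n² / p*_n` and `D[p] = ∑_n p*_n (p_{n+1}/p*_{n+1} - p_n/p*_n)²`. -/
theorem energy_dissipation (μ : ℝ) (hμ : 0 < μ) (p : ℝ → ℕ → ℝ)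
    (hode : ∀ t ∈ Set.Ici (0 : ℝ), ∀ n : ℕ,
      HasDerivWithinAt (fun s => p s n) (gen μ (p t) n) (Set.Ici 0) t)
    (hV : ∀ t ∈ Set.Ici (0 : ℝ), memV μ (p t))
    (hunifE : UnifConvOnCompacts (fun n t => (p t n - pstar μ n) ^ 2 / pstar μ n))
    (hunifE' : UnifConvOnCompacts
      (fun n t => 2 * (p t n - pstar μ n) * gen μ (p t) n / pstar μ n)) :
    ∀ t ∈ Set.Ici (0 : ℝ),
      HasDerivWithinAt (fun s => ∑' n : ℕ, (p s n - pstar μ n) ^ 2 / pstar μ n)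
        (-2 * μ * ∑' n : ℕ, pstar μ n * (p t (n + 1) / pstar μ (n + 1) - p t n / pstar μ n) ^ 2)
        (Set.Ici 0) t :=
  energy_dissipation_general μ hμ p hode hunifE hunifE'
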